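/- Let Ω ⊆ ℂ be an open set and a ∈ Ω. Let (h_n) be a sequence of real-valued harmonic functions on Ω that is uniformly bounded on every compact subset of Ω and converges locally uniformly on Ω ∖ {a} to a function h. Then (h_n) converges locally uniformly on all of Ω, and its limit is a harmonic function on Ω extending h. -/

import Mathlib

/-! On a compact annulus around `a` the sequence converges uniformly. For `z` in the disc enclosed
by the annulus, the mean value property of `h m - h n` on a circle around `z` lying in the annulus
bounds `|h m z - h n z|` by the supremum of `|h m - h n|` on the annulus, so the sequence is
uniformly Cauchy on that disc as well. It therefore has a limit at `a`, and converges locally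
uniformly on all of `Ω`. The mean value property passes to locally uniform limits (uniform
convergence on each circle), so the limit is harmonic. -/

open Filter Topology

/-- A real-valued function on an open subset of `ℂ` is harmonic if it is continuous and
satisfies the mean value property on all closed discs contained in the domain. -/
def IsHarmonicOn (f : ℂ → ℝ) (Ω : Set ℂ) : Prop :=
  ContinuousOn f Ω ∧ ∀ z : ℂ, ∀ r : ℝ, 0 < r → Metric.closedBall z r ⊆ Ω →
    f z = (2 * Real.pi)⁻¹ *
      ∫ t in (0:ℝ)..(2 * Real.pi), f (z + r * Complex.exp (t * Complex.I))

open Metric Real Set Interval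

theorem TendstoUniformlyOn.tendsto_circleAverage {ι E : Type*} [NormedAddCommGroup E]
    [NormedSpace ℝ E] {l : Filter ι} [l.IsCountablyGenerated] {F : ι → ℂ → E} {G : ℂ → E}
    {c : ℂ} {R : ℝ} (hF : ∀ᶠ i in l, ContinuousOn (F i) (sphere c |R|))
    (h : TendstoUniformlyOn F G l (sphere c |R|)) :
    Tendsto (fun i ↦ circleAverage (F i) c R) l (𝓝 (circleAverage G c R)) := by
  have hmaps : MapsTo (circleMap c R) [[0, 2 * π]] (sphere c |R|) :=
    fun θ _ ↦ circleMap_mem_sphere' c R θ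
  refine Tendsto.const_smul ?_ _
  exact TendstoUniformlyOn.tendsto_intervalIntegral_of_continuousOn
    (hF.mono fun i hi ↦ hi.comp (continuous_circleMap c R).continuousOn hmaps)
    ((h.comp (circleMap c R)).mono hmaps)

theorem TendstoLocallyUniformlyOn.exists_update_of_uniformCauchySeqOn {ι α β : Type*}
    [TopologicalSpace α] [T1Space α] [DecidableEq α] [UniformSpace β] [CompleteSpace β]
    {l : Filter ι} [l.NeBot]
    {F : ι → α → β} {g : α → β} {Ω s : Set α} {a : α} (hΩ : IsOpen Ω)
    (hg : TendstoLocallyUniformlyOn F g l (Ω \ {a})) (hs : s ∈ 𝓝 a)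
    (hF : UniformCauchySeqOn F l s) :
    ∃ L, TendstoLocallyUniformlyOn F (Function.update g a L) l Ω := by
  obtain ⟨L, hL⟩ := CompleteSpace.complete (hF.cauchy_map (mem_of_mem_nhds hs))
  refine ⟨L, ?_⟩
  have hlim : ∀ x ∈ s ∩ Ω, Tendsto (F · x) l (𝓝 (Function.update g a L x)) := by
    rintro x ⟨-, hxΩ⟩
    rcases eq_or_ne x a with rfl | hxa
    · rw [Function.update_self]
      exact hL
    · simpa [hxa] using hg.tendsto_at ⟨hxΩ, hxa⟩
  have hnear : TendstoLocallyUniformlyOn F (Function.update g a L) l (interior s ∩ Ω) :=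
    ((hF.mono inter_subset_left).tendstoUniformlyOn_of_tendsto hlim).tendstoLocallyUniformlyOn.mono
      (inter_subset_inter_left _ interior_subset)
  have haway : TendstoLocallyUniformlyOn F (Function.update g a L) l (Ω \ {a}) :=
    hg.congr_right fun x hx ↦ (Function.update_of_ne hx.2 L g).symm
  have hcover : Ω = Ω \ {a} ∪ interior s ∩ Ω := by
    refine (union_subset sdiff_subset inter_subset_right).antisymm' fun x hx ↦ ?_
    rcases eq_or_ne x a with rfl | hxa
    · exact Or.inr ⟨mem_interior_iff_mem_nhds.2 hs, hx⟩
    · exact Or.inl ⟨hx, hxa⟩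
  rw [hcover]
  exact haway.union (hΩ.sdiff isClosed_singleton) (isOpen_interior.inter hΩ) hnear

theorem sphere_subset_closedBall_diff_ball {α : Type*} [PseudoMetricSpace α] {a z : α} {r : ℝ}
    (hz : z ∈ closedBall a r) : sphere z (2 * r) ⊆ closedBall a (3 * r) \ ball a r := by
  intro w hw
  rw [mem_closedBall] at hz
  rw [mem_sphere] at hw
  have h₁ := dist_triangle w z a
  have h₂ := dist_triangle w a z
  rw [dist_comm a z] at h₂
  simp only [Set.mem_sdiff, mem_closedBall, mem_ball, not_lt]
  constructor <;> linarith

theorem isHarmonicOn_iff_circleAverage {f : ℂ → ℝ} {Ω : Set ℂ} : IsHarmonicOn f Ω ↔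
    ContinuousOn f Ω ∧ ∀ z r, 0 < r → closedBall z r ⊆ Ω → f z = circleAverage f z r :=
  Iff.rfl

namespace IsHarmonicOn

variable {f g : ℂ → ℝ} {Ω : Set ℂ}

theorem eq_circleAverage (hf : IsHarmonicOn f Ω) {z : ℂ} {r : ℝ} (hr : 0 < r)
    (hball : closedBall z r ⊆ Ω) : f z = circleAverage f z r :=
  hf.2 z r hr hball

theorem circleIntegrable (hf : IsHarmonicOn f Ω) {z : ℂ} {r : ℝ} (hr : 0 < r)
    (hball : closedBall z r ⊆ Ω) : CircleIntegrable f z r :=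
  (hf.1.mono (sphere_subset_closedBall.trans hball)).circleIntegrable hr.le

theorem sub (hf : IsHarmonicOn f Ω) (hg : IsHarmonicOn g Ω) : IsHarmonicOn (f - g) Ω := by
  refine isHarmonicOn_iff_circleAverage.2 ⟨hf.1.sub hg.1, fun z r hr hball ↦ ?_⟩
  rw [circleAverage_sub (hf.circleIntegrable hr hball) (hg.circleIntegrable hr hball),
    ← hf.eq_circleAverage hr hball, ← hg.eq_circleAverage hr hball, Pi.sub_apply]

theorem abs_le_of_forall_sphere (hf : IsHarmonicOn f Ω) {z : ℂ} {r δ : ℝ} (hr : 0 < r)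
    (hball : closedBall z r ⊆ Ω) (hδ : ∀ w ∈ sphere z r, |f w| ≤ δ) : |f z| ≤ δ := by
  rw [hf.eq_circleAverage hr hball]
  refine abs_circleAverage_le_circleAverage_abs.trans (circleAverage_mono_on_of_le_circle ?_ ?_)
  · exact (hf.1.mono (sphere_subset_closedBall.trans hball)).abs.circleIntegrable hr.le
  · simpa [abs_of_pos hr] using hδ

theorem uniformCauchySeqOn_of_forall_sphere_subset {ι : Type*} {l : Filter ι} {F : ι → ℂ → ℝ}
    (hF : ∀ i, IsHarmonicOn (F i) Ω) {s K : Set ℂ} {r : ℝ} (hr : 0 < r)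
    (hball : ∀ z ∈ s, closedBall z r ⊆ Ω) (hsphere : ∀ z ∈ s, sphere z r ⊆ K)
    (hK : UniformCauchySeqOn F l K) : UniformCauchySeqOn F l s := by
  intro u hu
  obtain ⟨ε, hε, hεu⟩ := Metric.mem_uniformity_dist.1 hu
  filter_upwards [hK _ (dist_mem_uniformity (half_pos hε))] with i hi z hz
  refine hεu (lt_of_le_of_lt ?_ (half_lt_self hε))
  refine ((hF i.1).sub (hF i.2)).abs_le_of_forall_sphere hr (hball z hz) fun w hw ↦ ?_
  exact (hi w (hsphere z hz hw)).le

theorem of_tendstoLocallyUniformlyOn {ι : Type*} {l : Filter ι} [l.NeBot]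
    [l.IsCountablyGenerated] {F : ι → ℂ → ℝ} (hF : ∀ i, IsHarmonicOn (F i) Ω)
    (hFG : TendstoLocallyUniformlyOn F g l Ω) : IsHarmonicOn g Ω := by
  refine ⟨hFG.continuousOn (.of_forall fun i ↦ (hF i).1), fun z r hr hball ↦ ?_⟩
  have hsphere : sphere z |r| ⊆ Ω := by
    rw [abs_of_pos hr]
    exact sphere_subset_closedBall.trans hball
  have hunif : TendstoUniformlyOn F g l (sphere z |r|) :=
    (tendstoLocallyUniformlyOn_iff_tendstoUniformlyOn_of_compact (isCompact_sphere _ _)).1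
      (hFG.mono hsphere)
  refine tendsto_nhds_unique (hFG.tendsto_at (hball (mem_closedBall_self hr.le))) ?_
  refine (hunif.tendsto_circleAverage (.of_forall fun i ↦ (hF i).1.mono hsphere)).congr fun i ↦ ?_
  exact ((hF i).eq_circleAverage hr hball).symm

end IsHarmonicOn

theorem stmt_16_general (Ω : Set ℂ) (hΩ : IsOpen Ω) (a : ℂ) (ha : a ∈ Ω)
    (h : ℕ → ℂ → ℝ) (hharm : ∀ n, IsHarmonicOn (h n) Ω)
    (g : ℂ → ℝ)
    (hconv : TendstoLocallyUniformlyOn h g atTop (Ω \ {a})) :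
    ∃ H : ℂ → ℝ, IsHarmonicOn H Ω ∧ (∀ z ∈ Ω \ {a}, H z = g z) ∧
      TendstoLocallyUniformlyOn h H atTop Ω := by
  obtain ⟨r, hr, hball⟩ : ∃ r > 0, closedBall a (3 * r) ⊆ Ω := by
    obtain ⟨ε, hε, hεΩ⟩ := nhds_basis_closedBall.mem_iff.1 (hΩ.mem_nhds ha)
    exact ⟨ε / 3, by positivity, by rwa [mul_div_cancel₀ _ three_ne_zero]⟩
  set A := closedBall a (3 * r) \ ball a r
  have hA : A ⊆ Ω \ {a} := fun w hw ↦
    ⟨hball hw.1, by rintro rfl; exact hw.2 (mem_ball_self hr)⟩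
  have hcauchyA : UniformCauchySeqOn h atTop A :=
    ((tendstoLocallyUniformlyOn_iff_tendstoUniformlyOn_of_compact
      ((isCompact_closedBall _ _).diff isOpen_ball)).1 (hconv.mono hA)).uniformCauchySeqOn
  have hcauchy : UniformCauchySeqOn h atTop (closedBall a r) :=
    IsHarmonicOn.uniformCauchySeqOn_of_forall_sphere_subset hharm (by positivity)
      (fun z hz ↦ (closedBall_subset_closedBall' (by rw [mem_closedBall] at hz; linarith)).trans
        hball)
      (fun z hz ↦ sphere_subset_closedBall_diff_ball hz) hcauchyA
  obtain ⟨L, hL⟩ :=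
    hconv.exists_update_of_uniformCauchySeqOn hΩ (closedBall_mem_nhds a hr) hcauchy
  exact ⟨_, .of_tendstoLocallyUniformlyOn hharm hL, fun z hz ↦ Function.update_of_ne hz.2 L g, hL⟩

/-- **Removable-point convergence for harmonic functions.** If a sequence of harmonic functions
on an open set `Ω ⊆ ℂ` is uniformly bounded on every compact subset of `Ω` and converges locally
uniformly on `Ω ∖ {a}` to `g`, then it converges locally uniformly on all of `Ω`, and the limit
is a harmonic function on `Ω` extending `g`. -/
theorem stmt_16 (Ω : Set ℂ) (hΩ : IsOpen Ω) (a : ℂ) (ha : a ∈ Ω)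
    (h : ℕ → ℂ → ℝ) (hharm : ∀ n, IsHarmonicOn (h n) Ω)
    (hbound : ∀ K : Set ℂ, K ⊆ Ω → IsCompact K → ∃ C : ℝ, ∀ n, ∀ z ∈ K, |h n z| ≤ C)
    (g : ℂ → ℝ)
    (hconv : TendstoLocallyUniformlyOn h g atTop (Ω \ {a})) :
    ∃ H : ℂ → ℝ, IsHarmonicOn H Ω ∧ (∀ z ∈ Ω \ {a}, H z = g z) ∧
      TendstoLocallyUniformlyOn h H atTop Ω :=
  stmt_16_general Ω hΩ a ha h hharm g hconv
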